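/- arXiv:1104.5361 — 8 statements merged into one kernel-verified Lean document; each statement's English description precedes it below -/
import Mathlib

section
/- Let V be a finite set, F a family of subsets of V with a strict partial order ≺ satisfying the IS-family axioms. For any S ∈ F, hat(S) = S \ Vis(S), where hat(S) = S \ ⋃_{S' ≺ S} S'. -/
/-- A family of subsets of a finite set `V` with a strict partial order. -/
structure ISFamily (V : Type*) [DecidableEq V] [Fintype V] where
  F : Finset (Finset V)
  prec : Finset V → Finset V → Prop
  prec_trans : ∀ {a b c : Finset V}, prec a b → prec b c → prec a c
  prec_irrefl : ∀ a : Finset V, ¬ prec a a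

namespace ISFamily

variable {V : Type*} [DecidableEq V] [Fintype V] (Fam : ISFamily V)

/-- The immediate predecessors of `S` in the family. -/
def Pred (S : Finset V) : Set (Finset V) :=
  {S' | S' ∈ Fam.F ∧ Fam.prec S' S ∧
    ¬ ∃ S'' ∈ Fam.F, Fam.prec S' S'' ∧ Fam.prec S'' S}

/-- `S'` covers `v` if some member of the family preceding `S'` contains `v` while
`S'` does not. -/
def Covers (S' : Finset V) (v : V) : Prop :=
  ∃ S'' ∈ Fam.F, Fam.prec S'' S' ∧ v ∈ S'' ∧ v ∉ S'

/-- The visible set of `S`: vertices belonging to some immediate predecessor of `S`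
and not covered by any immediate predecessor of `S`. -/
def Vis (S : Finset V) : Set V :=
  {v | (∃ S' ∈ Fam.Pred S, v ∈ S') ∧ ∀ S' ∈ Fam.Pred S, ¬ Fam.Covers S' v}

/-- `hat S = S \ ⋃_{S' ≺ S} S'`. -/
def hat (S : Finset V) : Set V :=
  ↑S \ ⋃ S' ∈ {S' | S' ∈ Fam.F ∧ Fam.prec S' S}, (↑S' : Set V)

/-- `W` is a witness of `v` w.r.t. `S`: a minimal element of the family with
`S ≺ W` and `v ∉ W`. -/
def IsWitness (S : Finset V) (v : V) (W : Finset V) : Prop :=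
  W ∈ Fam.F ∧ Fam.prec S W ∧ v ∉ W ∧
    ∀ W' ∈ Fam.F, Fam.prec S W' → v ∉ W' → ¬ Fam.prec W' W

/-- The axioms making `(F, ≺)` an IS-family with smallest element `sm`. -/
structure IsIS (sm : Finset V) : Prop where
  sm_mem : sm ∈ Fam.F
  SE : ∀ S ∈ Fam.F, S ≠ sm → Fam.prec sm S
  SM : ∀ S₁ ∈ Fam.F, ∀ S₂ ∈ Fam.F, Fam.prec S₁ S₂ → S₁.card < S₂.card
  SW : ∀ S ∈ Fam.F, ∀ v ∈ S, ∀ W₁ W₂ : Finset V,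
    Fam.IsWitness S v W₁ → Fam.IsWitness S v W₂ → W₁ = W₂
  TE : ∀ S₁ ∈ Fam.F, ∀ S₂ ∈ Fam.F, ∀ S₃ ∈ Fam.F,
    Fam.prec S₁ S₂ → Fam.prec S₂ S₃ → ∀ v ∈ S₁, v ∉ S₂ → v ∉ S₃
  LVS : ∀ S ∈ Fam.F, ∀ S' ∈ Fam.Pred S, S'.card ≤ (Fam.Vis S).ncard
  DVS : ∀ S ∈ Fam.F, S ≠ sm → ¬ (Fam.Vis S ⊆ ↑S)

/-- The excess of `S` relative to the smallest element `sm`. -/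
def ex (sm S : Finset V) : ℕ := S.card - sm.card

/-- The members of the family of excess at most `x`. -/
def Ex (sm : Finset V) (x : ℕ) : Finset (Finset V) :=
  Fam.F.filter (fun S => ex sm S ≤ x)

/-- The `x`-hat of `S`: elements of `hat S` not excluded by any member of `E_x`
succeeding `S`. -/
def hatx (sm : Finset V) (x : ℕ) (S : Finset V) : Set V :=
  {v ∈ Fam.hat S | ¬ ∃ S' ∈ Fam.Ex sm x, Fam.prec S S' ∧ v ∉ S'}

/-- `M(x) = Σ_{S ∈ E_x} 2^{x - ex(S)} · |hat_x(S)|`. -/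
noncomputable def M (sm : Finset V) (x : ℕ) : ℕ :=
  ∑ S ∈ Fam.Ex sm x, 2 ^ (x - ex sm S) * (Fam.hatx sm x S).ncard

end ISFamily

open ISFamily in
/-- In an IS-family, `hat(S) = S \ Vis(S)`. -/
theorem hat_eq_sdiff_Vis {V : Type*} [DecidableEq V] [Fintype V]
    (Fam : ISFamily V) (sm : Finset V) (hIS : Fam.IsIS sm)
    (S : Finset V) (hS : S ∈ Fam.F) :
    Fam.hat S = ↑S \ Fam.Vis S := by
  classical
  ext v
  simp only [ISFamily.hat, ISFamily.Vis, Set.mem_diff, Set.mem_iUnion, Set.mem_setOf_eq,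
    Finset.mem_coe, exists_prop]
  constructor
  · rintro ⟨hvS, hnot⟩
    refine ⟨hvS, ?_⟩
    rintro ⟨⟨S', hS'Pred, hvS'⟩, -⟩
    exact hnot ⟨S', ⟨hS'Pred.1, hS'Pred.2.1⟩, hvS'⟩
  · rintro ⟨hvS, hnvis⟩
    refine ⟨hvS, ?_⟩
    rintro ⟨S', ⟨hS'F, hprec⟩, hvS'⟩
    apply hnvis
    obtain ⟨P, hP, hPmax⟩ := (Fam.F.filter (fun T => Fam.prec T S ∧ v ∈ T)).exists_max_image
      Finset.card ⟨S', by simp [hS'F, hprec, hvS']⟩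
    rw [Finset.mem_filter] at hP
    have hPpred : P ∈ Fam.Pred S := by
      refine ⟨hP.1, hP.2.1, ?_⟩
      rintro ⟨S'', hS''F, h1, h2⟩
      have hvS'' : v ∈ S'' := by
        by_contra hv
        exact (hIS.TE P hP.1 S'' hS''F S hS h1 h2 v hP.2.2 hv) hvS
      have := hPmax S'' (Finset.mem_filter.2 ⟨hS''F, h2, hvS''⟩)
      exact absurd (hIS.SM P hP.1 S'' hS''F h1) (not_lt.2 this)
    refine ⟨⟨P, hPpred, hP.2.2⟩, ?_⟩
    rintro Q hQ ⟨S'', hS''F, hprecQ, hvS'', hvQ⟩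
    exact (hIS.TE S'' hS''F Q hQ.1 S hS hprecQ hQ.2.1 v hvS'' hvQ) hvS
end

section
/- Let (F, ≺) be an IS-family, and let S₁, S₂ ∈ F with S₁ ≺ S₂ and v ∈ S₁ \ S₂. Let S* be the witness of v with respect to S₁ (a minimal element with S₁ ≺ S* and v ∈ S₁ \ S*). Then S* ⪯ S₂. -/
open ISFamily in
/-- If `S₁ ≺ S₂`, `v ∈ S₁ \ S₂` and `S*` is the witness of `v`
w.r.t. `S₁`, then `S* ⪯ S₂`. -/
theorem witness_basic {V : Type*} [DecidableEq V] [Fintype V]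
    (Fam : ISFamily V) (sm : Finset V) (hIS : Fam.IsIS sm)
    (S₁ S₂ : Finset V) (hS₁ : S₁ ∈ Fam.F) (hS₂ : S₂ ∈ Fam.F)
    (hprec : Fam.prec S₁ S₂) (v : V) (hv₁ : v ∈ S₁) (hv₂ : v ∉ S₂)
    (W : Finset V) (hW : Fam.IsWitness S₁ v W) :
    W = S₂ ∨ Fam.prec W S₂ := by
  classical
  set T : Finset (Finset V) :=
    Fam.F.filter (fun X => Fam.prec S₁ X ∧ v ∉ X ∧ (X = S₂ ∨ Fam.prec X S₂)) with hT
  have hS₂T : S₂ ∈ T := by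
    simp [hT, hS₂, hprec, hv₂]
  obtain ⟨W', hW'T, hmin⟩ := T.exists_min_image Finset.card ⟨S₂, hS₂T⟩
  rw [hT, Finset.mem_filter] at hW'T
  obtain ⟨hW'F, hpW', hvW', hle⟩ := hW'T
  have hwit : Fam.IsWitness S₁ v W' := by
    refine ⟨hW'F, hpW', hvW', ?_⟩
    intro X hXF hpX hvX hpXW'
    have hXT : X ∈ T := by
      rw [hT, Finset.mem_filter]
      refine ⟨hXF, hpX, hvX, ?_⟩
      rcases hle with rfl | h
      · exact Or.inr hpXW'
      · exact Or.inr (Fam.prec_trans hpXW' h)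
    have h1 := hmin X hXT
    have h2 := hIS.SM X hXF W' hW'F hpXW'
    omega
  have := hIS.SW S₁ hS₁ v hv₁ W W' hW hwit
  subst this
  exact hle
end

section
/- Let (F, ≺) be an IS-family and S ∈ F with v ∈ Vis(S) \ S. Then there exists S* ≺ S such that v ∈ hat(S*) and S is the witness of v with respect to S*. -/
open ISFamily in
/-- If `v ∈ Vis(S) \ S` then there is `S* ≺ S` with `v ∈ hat(S*)`
such that `S` is the witness of `v` w.r.t. `S*`. -/
theorem witness_advanced {V : Type*} [DecidableEq V] [Fintype V]
    (Fam : ISFamily V) (sm : Finset V) (hIS : Fam.IsIS sm)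
    (S : Finset V) (hS : S ∈ Fam.F) (v : V) (hvVis : v ∈ Fam.Vis S) (hvS : v ∉ S) :
    ∃ Sstar ∈ Fam.F, Fam.prec Sstar S ∧ v ∈ Fam.hat Sstar ∧
      Fam.IsWitness Sstar v S := by
  classical
  obtain ⟨⟨S₀, hS₀Pred, hvS₀⟩, hNoCover⟩ := hvVis
  -- the set of members preceding S and containing v
  set A : Finset (Finset V) := Fam.F.filter (fun T => Fam.prec T S ∧ v ∈ T) with hA
  have hS₀A : S₀ ∈ A := by
    simp only [hA, Finset.mem_filter]
    exact ⟨hS₀Pred.1, hS₀Pred.2.1, hvS₀⟩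
  obtain ⟨Sstar, hSstarA, hmin⟩ := A.exists_min_image (fun T => T.card) ⟨S₀, hS₀A⟩
  simp only [hA, Finset.mem_filter] at hSstarA
  obtain ⟨hSstarF, hSstarS, hvSstar⟩ := hSstarA
  refine ⟨Sstar, hSstarF, hSstarS, ?_, ?_⟩
  · -- v ∈ hat Sstar
    refine ⟨hvSstar, ?_⟩
    simp only [Set.mem_iUnion, Set.mem_setOf_eq, not_exists]
    rintro T ⟨hTF, hTprec⟩ hvT
    have hTA : T ∈ A := by
      simp only [hA, Finset.mem_filter]
      exact ⟨hTF, Fam.prec_trans hTprec hSstarS, hvT⟩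
    have := hmin T hTA
    have := hIS.SM T hTF Sstar hSstarF hTprec
    omega
  · refine ⟨hS, hSstarS, hvS, ?_⟩
    intro W' hW'F hSstarW' hvW' hW'S
    -- find a maximal element P with W' ⪯ P ≺ S
    set B : Finset (Finset V) := Fam.F.filter
      (fun P => (P = W' ∨ Fam.prec W' P) ∧ Fam.prec P S) with hB
    have hW'B : W' ∈ B := by
      simp only [hB, Finset.mem_filter]
      exact ⟨hW'F, Or.inl trivial, hW'S⟩
    obtain ⟨P, hPB, hmax⟩ := B.exists_max_image (fun T => T.card) ⟨W', hW'B⟩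
    simp only [hB, Finset.mem_filter] at hPB
    obtain ⟨hPF, hW'P, hPS⟩ := hPB
    have hPPred : P ∈ Fam.Pred S := by
      refine ⟨hPF, hPS, ?_⟩
      rintro ⟨S'', hS''F, hPS'', hS''S⟩
      have hS''B : S'' ∈ B := by
        simp only [hB, Finset.mem_filter]
        refine ⟨hS''F, Or.inr ?_, hS''S⟩
        rcases hW'P with h | h
        · rw [← h]; exact hPS''
        · exact Fam.prec_trans h hPS''
      have := hmax S'' hS''B
      have := hIS.SM P hPF S'' hS''F hPS''
      omega
    have hSstarP : Fam.prec Sstar P := by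
      rcases hW'P with h | h
      · rw [h]; exact hSstarW'
      · exact Fam.prec_trans hSstarW' h
    have hvP : v ∉ P := by
      rcases hW'P with h | h
      · rw [h]; exact hvW'
      · exact hIS.TE Sstar hSstarF W' hW'F P hPF hSstarW' h v hvSstar hvW'
    exact hNoCover P hPPred ⟨Sstar, hSstarF, hSstarP, hvSstar, hvP⟩
end

section
/- Let (F, ≺) be an IS-family with minimum element sm(F), and define the excess ex(S) = |S| − |sm(F)|. Let S ∈ F with S ≠ sm(F). For each v ∈ Vis(S) \ S, let S(v) ≺ S be such that v ∈ hat(S(v)) and S is the witness of v w.r.t. S(v). Then |hat(S)| ≤ Σ_{v ∈ Vis(S) \ S} 2^{ex(S) − ex(S(v))}. -/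
/-!
By (DVS) there is some `v₀ ∈ Vis S \ S`. Extend `S(v₀) ≺ S` to an immediate predecessor
`T ⪰ S(v₀)` of `S`. As `hat S` avoids `Vis S`, `|hat S| + |Vis S| ≤ |S| + |Vis S \ S|`, and
(LVS) gives `|S(v₀)| ≤ |T| ≤ |Vis S|`; hence `|hat S| ≤ (|S| - |S(v₀)|) + |Vis S \ S|`.
In the sum, the term of `v₀` is `2 ^ d > d` with `d = ex S - ex S(v₀) ≥ |S| - |S(v₀)|`,
and each of the other terms is at least `1`.
-/

theorem Finset.add_card_le_sum_two_pow {α : Type*} [DecidableEq α] {s : Finset α} {a : α}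
    (ha : a ∈ s) (f : α → ℕ) : f a + s.card ≤ ∑ v ∈ s, 2 ^ f v := by
  rw [← Finset.add_sum_erase s _ ha, ← Finset.card_erase_add_one ha]
  have hrest : (s.erase a).card ≤ ∑ v ∈ s.erase a, 2 ^ f v := by
    simpa using Finset.card_nsmul_le_sum (s.erase a) (2 ^ f ·) 1 fun v _ => Nat.one_le_two_pow
  have := Nat.lt_two_pow_self (n := f a)
  omega

theorem Set.Finite.add_ncard_le_finsum_two_pow {α : Type*} {s : Set α} (hs : s.Finite) {a : α}
    (ha : a ∈ s) (f : α → ℕ) : f a + s.ncard ≤ ∑ᶠ v ∈ s, 2 ^ f v := by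
  classical
  rw [← hs.coe_toFinset, finsum_mem_coe_finset, Set.ncard_coe_finset]
  exact Finset.add_card_le_sum_two_pow (hs.mem_toFinset.mpr ha) f

namespace ISFamily

variable {V : Type*} [DecidableEq V] [Fintype V] (Fam : ISFamily V)

theorem exists_pred_of_prec {S' S : Finset V} (hS' : S' ∈ Fam.F) (h : Fam.prec S' S) :
    ∃ T ∈ Fam.Pred S, S' = T ∨ Fam.prec S' T := by
  have : IsTrans (Finset V) (flip Fam.prec) := ⟨fun _ _ _ hab hbc => Fam.prec_trans hbc hab⟩
  have : Std.Irrefl (flip Fam.prec) := ⟨Fam.prec_irrefl⟩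
  obtain ⟨T, ⟨hT, hS'T, hTS⟩, hTmax⟩ :=
    (Finite.wellFounded_of_trans_of_irrefl (flip Fam.prec)).has_min
      {T | T ∈ Fam.F ∧ (S' = T ∨ Fam.prec S' T) ∧ Fam.prec T S} ⟨S', hS', Or.inl rfl, h⟩
  refine ⟨T, ⟨hT, hTS, ?_⟩, hS'T⟩
  rintro ⟨S'', hS'', hTS'', hS''S⟩
  have hS'S'' : Fam.prec S' S'' := hS'T.elim (· ▸ hTS'') (Fam.prec_trans · hTS'')
  exact hTmax S'' ⟨hS'', Or.inr hS'S'', hS''S⟩ hTS''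

theorem hat_subset_sdiff_vis (S : Finset V) : Fam.hat S ⊆ ↑S \ Fam.Vis S := by
  rintro v ⟨hvS, hv⟩
  refine ⟨hvS, fun ⟨⟨S', hS', hvS'⟩, _⟩ => hv ?_⟩
  exact Set.mem_biUnion (x := S') ⟨hS'.1, hS'.2.1⟩ hvS'

theorem ncard_hat_add_ncard_vis_le (S : Finset V) :
    (Fam.hat S).ncard + (Fam.Vis S).ncard ≤ S.card + (Fam.Vis S \ ↑S).ncard :=
  calc (Fam.hat S).ncard + (Fam.Vis S).ncard
      ≤ (↑S \ Fam.Vis S).ncard + (Fam.Vis S).ncard := by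
        gcongr
        · exact Set.toFinite _
        · exact Fam.hat_subset_sdiff_vis S
    _ = (↑S ∪ Fam.Vis S \ ↑S).ncard := by
        rw [Set.ncard_sdiff_add_ncard, Set.union_sdiff_self]
    _ ≤ S.card + (Fam.Vis S \ ↑S).ncard := by
        grw [Set.ncard_union_le, Set.ncard_coe_finset]

variable {Fam} {sm : Finset V}

theorem IsIS.card_sm_le (hIS : Fam.IsIS sm) {T : Finset V} (hT : T ∈ Fam.F) :
    sm.card ≤ T.card := by
  rcases eq_or_ne T sm with rfl | hne
  · rfl
  · exact (hIS.SM _ hIS.sm_mem _ hT (hIS.SE T hT hne)).le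

theorem IsIS.ncard_hat_add_card_le (hIS : Fam.IsIS sm) {S T : Finset V} (hS : S ∈ Fam.F)
    (hT : T ∈ Fam.Pred S) : (Fam.hat S).ncard + T.card ≤ S.card + (Fam.Vis S \ ↑S).ncard :=
  (Nat.add_le_add_left (hIS.LVS S hS T hT) _).trans (Fam.ncard_hat_add_ncard_vis_le S)

end ISFamily

open ISFamily in
/-- `|hat(S)| ≤ Σ_{v ∈ Vis(S) \ S} 2^{ex(S) − ex(S(v))}`. -/
theorem basic_bound {V : Type*} [DecidableEq V] [Fintype V]
    (Fam : ISFamily V) (sm : Finset V) (hIS : Fam.IsIS sm)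
    (S : Finset V) (hS : S ∈ Fam.F) (hSne : S ≠ sm)
    (Sv : V → Finset V)
    (hSv : ∀ v ∈ Fam.Vis S \ ↑S, Sv v ∈ Fam.F ∧ Fam.prec (Sv v) S ∧
      v ∈ Fam.hat (Sv v) ∧ Fam.IsWitness (Sv v) v S) :
    (Fam.hat S).ncard ≤ ∑ᶠ v ∈ Fam.Vis S \ ↑S, 2 ^ (ex sm S - ex sm (Sv v)) := by
  obtain ⟨v₀, hv₀⟩ : (Fam.Vis S \ ↑S).Nonempty := Set.not_subset.mp (hIS.DVS S hS hSne)
  obtain ⟨hSv₀, hSv₀S, -, -⟩ := hSv v₀ hv₀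
  obtain ⟨T, hT, hSv₀T⟩ := Fam.exists_pred_of_prec hSv₀ hSv₀S
  have hcard_T : (Sv v₀).card ≤ T.card :=
    hSv₀T.elim (fun h => h ▸ le_rfl) fun h => (hIS.SM _ hSv₀ _ hT.1 h).le
  have hhat := hIS.ncard_hat_add_card_le hS hT
  have hsm := hIS.card_sm_le hSv₀
  calc (Fam.hat S).ncard ≤ (ex sm S - ex sm (Sv v₀)) + (Fam.Vis S \ ↑S).ncard := by
        unfold ex; omega
    _ ≤ _ := (Set.toFinite _).add_ncard_le_finsum_two_pow hv₀ (fun v => ex sm S - ex sm (Sv v))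
end

section
/- Let (F, ≺) be an IS-family with minimum element sm(F) and define ex(S) = |S| − |sm(F)|, E_x = {S ∈ F : ex(S) ≤ x}, hat_x(S) = {v ∈ hat(S) : no S' ∈ E_x with S ≺ S' and v ∈ S \ S'}, and M(x) = Σ_{S ∈ E_x} 2^{x − ex(S)} · |hat_x(S)|. Then for every x ≥ 0, M(x+1) ≤ 2·M(x). -/
/-!
Split `M(x+1)` over `E_x` and the members of excess exactly `x+1`. On `E_x` the weights double
and the `x`-hats can only shrink, so it suffices to pay for each new `S` with vertices that leave
some `hat_x(T)`. A new `S` has `|hat S| ≤ 2^d · |Vis S \ S|` with `d = |S| - |P|` for a largest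
predecessor `P`: visible vertices inside `S` are not in `hat S`, there are at least `|P|` visible
vertices (LVS), and at least one outside `S` (DVS). A vertex `v ∈ Vis S \ S` is charged to a
smallest predecessor `T` of `S` containing `v`; then `v ∈ hat T` and `S` is the witness of `v` for
`T`, so `v` leaves `hat_x(T)` exactly at level `x+1`, where its weight in `2·M(x)` is
`2^(x+1-ex T) ≥ 2^d`. Uniqueness of witnesses (SW) makes the charging injective.
-/

namespace Finset

theorem sum_card_smul_le_sum_card_smul {ι κ α M : Type*} [AddCommMonoid M] [PartialOrder M]
    [IsOrderedAddMonoid M] [CanonicallyOrderedAdd M] {s : Finset ι} {t : Finset κ}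
    {A : ι → Finset α} {B : κ → Finset α} {c : ι → M} {w : κ → M} (f : ι → α → κ)
    (hmaps : ∀ i ∈ s, ∀ a ∈ A i, f i a ∈ t ∧ a ∈ B (f i a))
    (hle : ∀ i ∈ s, ∀ a ∈ A i, c i ≤ w (f i a))
    (hinj : ∀ i ∈ s, ∀ j ∈ s, ∀ a ∈ A i, a ∈ A j → f i a = f j a → i = j) :
    ∑ i ∈ s, #(A i) • c i ≤ ∑ k ∈ t, #(B k) • w k := by
  classical
  let charge : (Σ _ : ι, α) → (Σ _ : κ, α) := fun p => ⟨f p.1 p.2, p.2⟩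
  have hcharge_inj : Set.InjOn charge (s.sigma A) := by
    rintro ⟨i, a⟩ hia ⟨j, b⟩ hjb heq
    simp only [coe_sigma, Set.mem_sigma_iff, mem_coe] at hia hjb
    obtain ⟨hf, rfl⟩ : f i a = f j b ∧ a = b := by simpa [charge] using heq
    rw [hinj i hia.1 j hjb.1 a hia.2 hjb.2 hf]
  have hcharge_maps : (s.sigma A).image charge ⊆ t.sigma B := by
    simp only [image_subset_iff, mem_sigma]
    exact fun p hp => hmaps p.1 hp.1 p.2 hp.2
  calc ∑ i ∈ s, #(A i) • c i = ∑ p ∈ s.sigma A, c p.1 := by simp [sum_sigma]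
    _ ≤ ∑ p ∈ s.sigma A, w (charge p).1 :=
        sum_le_sum fun p hp => hle p.1 (mem_sigma.1 hp).1 p.2 (mem_sigma.1 hp).2
    _ = ∑ q ∈ (s.sigma A).image charge, w q.1 := (sum_image (f := fun q => w q.1) hcharge_inj).symm
    _ ≤ ∑ q ∈ t.sigma B, w q.1 := sum_le_sum_of_subset hcharge_maps
    _ = ∑ k ∈ t, #(B k) • w k := by simp [sum_sigma]

end Finset

namespace ISFamily

variable {V : Type*} [DecidableEq V] [Fintype V] {Fam : ISFamily V} {sm : Finset V}

theorem Ex_mono {x y : ℕ} (hxy : x ≤ y) : Fam.Ex sm x ⊆ Fam.Ex sm y :=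
  Finset.monotone_filter_right _ fun _ _ h => h.trans hxy

theorem hatx_antitone {x y : ℕ} (hxy : x ≤ y) (S : Finset V) :
    Fam.hatx sm y S ⊆ Fam.hatx sm x S :=
  fun _ ⟨hhat, hnot⟩ => ⟨hhat, fun ⟨S', hS', hSS', hv⟩ => hnot ⟨S', Ex_mono hxy hS', hSS', hv⟩⟩

theorem disjoint_hat_Vis (S : Finset V) : Disjoint (Fam.hat S) (Fam.Vis S) := by
  rw [Set.disjoint_left]
  rintro v ⟨-, hv⟩ ⟨⟨P, hP, hvP⟩, -⟩
  exact hv (Set.mem_iUnion₂.2 ⟨P, ⟨hP.1, hP.2.1⟩, hvP⟩)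

theorem not_mem_hatx_of_isWitness {y : ℕ} {S T : Finset V} {v : V}
    (hW : Fam.IsWitness T v S) (hS : S ∈ Fam.Ex sm y) : v ∉ Fam.hatx sm y T :=
  fun hv => hv.2 ⟨S, hS, hW.2.1, hW.2.2.1⟩

theorem Ex_succ_eq_union (x : ℕ) :
    Fam.Ex sm (x + 1) = Fam.Ex sm x ∪ Fam.F.filter (ex sm · = x + 1) := by
  ext S
  simp only [Ex, Finset.mem_union, Finset.mem_filter, Nat.le_succ_iff]
  tauto

theorem disjoint_Ex_filter_ex_eq_succ (x : ℕ) :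
    Disjoint (Fam.Ex sm x) (Fam.F.filter (ex sm · = x + 1)) := by
  simp only [Ex, Finset.disjoint_filter]
  omega

theorem M_succ_eq (x : ℕ) :
    Fam.M sm (x + 1) =
      ∑ S ∈ Fam.Ex sm x, 2 ^ (x + 1 - ex sm S) * (Fam.hatx sm (x + 1) S).ncard +
        ∑ S ∈ Fam.F.filter (ex sm · = x + 1), (Fam.hatx sm (x + 1) S).ncard := by
  rw [M, Ex_succ_eq_union, Finset.sum_union (disjoint_Ex_filter_ex_eq_succ x)]
  congr 1
  refine Finset.sum_congr rfl fun S hS => ?_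
  simp [(Finset.mem_filter.1 hS).2]

theorem two_mul_M_eq (x : ℕ) :
    2 * Fam.M sm x =
      ∑ S ∈ Fam.Ex sm x, 2 ^ (x + 1 - ex sm S) * (Fam.hatx sm (x + 1) S).ncard +
        ∑ S ∈ Fam.Ex sm x,
          2 ^ (x + 1 - ex sm S) * (Fam.hatx sm x S \ Fam.hatx sm (x + 1) S).ncard := by
  rw [M, Finset.mul_sum, ← Finset.sum_add_distrib]
  refine Finset.sum_congr rfl fun S hS => ?_
  have hexS : ex sm S ≤ x := (Finset.mem_filter.1 hS).2
  rw [← Set.ncard_sdiff_add_ncard_of_subset (hatx_antitone x.le_succ S), Nat.sub_add_comm hexS,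
    pow_succ]
  ring

namespace IsIS

variable (hIS : Fam.IsIS sm)
include hIS

theorem card_le {S : Finset V} (hS : S ∈ Fam.F) : sm.card ≤ S.card := by
  by_cases h : S = sm
  · rw [h]
  · exact (hIS.SM sm hIS.sm_mem S hS (hIS.SE S hS h)).le

theorem exists_mem_Pred_of_prec {R S : Finset V} (hR : R ∈ Fam.F) (hRS : Fam.prec R S) :
    ∃ P ∈ Fam.Pred S, R = P ∨ Fam.prec R P := by
  classical
  obtain ⟨P, hP, hmax⟩ := Finset.exists_max_image
    (Fam.F.filter fun T => (R = T ∨ Fam.prec R T) ∧ Fam.prec T S) Finset.card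
    ⟨R, Finset.mem_filter.2 ⟨hR, Or.inl rfl, hRS⟩⟩
  obtain ⟨hPF, hRP, hPS⟩ := Finset.mem_filter.1 hP
  refine ⟨P, ⟨hPF, hPS, fun ⟨T, hT, hPT, hTS⟩ => ?_⟩, hRP⟩
  have hRT : R = T ∨ Fam.prec R T := Or.inr (hRP.elim (· ▸ hPT) (Fam.prec_trans · hPT))
  exact (hIS.SM P hPF T hT hPT).not_ge (hmax T (Finset.mem_filter.2 ⟨hT, hRT, hTS⟩))

theorem exists_mem_Pred_forall_card_le {S : Finset V} (hS : S ∈ Fam.F) (hne : S ≠ sm) :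
    ∃ P ∈ Fam.Pred S, ∀ T ∈ Fam.F, Fam.prec T S → T.card ≤ P.card := by
  classical
  obtain ⟨R, hR, hmax⟩ := Finset.exists_max_image (Fam.F.filter (Fam.prec · S)) Finset.card
    ⟨sm, Finset.mem_filter.2 ⟨hIS.sm_mem, hIS.SE S hS hne⟩⟩
  obtain ⟨hRF, hRS⟩ := Finset.mem_filter.1 hR
  obtain ⟨P, hP, hRP⟩ := hIS.exists_mem_Pred_of_prec hRF hRS
  refine ⟨P, hP, fun T hT hTS => (hmax T (Finset.mem_filter.2 ⟨hT, hTS⟩)).trans ?_⟩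
  rcases hRP with rfl | hRP
  · exact le_rfl
  · exact (hIS.SM R hRF P hP.1 hRP).le

theorem exists_isWitness {T S' : Finset V} {v : V} (hS' : S' ∈ Fam.F) (hTS' : Fam.prec T S')
    (hvS' : v ∉ S') : ∃ W, Fam.IsWitness T v W ∧ W.card ≤ S'.card := by
  classical
  obtain ⟨W, hW, hmin⟩ := Finset.exists_min_image
    (Fam.F.filter fun W => Fam.prec T W ∧ v ∉ W) Finset.card
    ⟨S', Finset.mem_filter.2 ⟨hS', hTS', hvS'⟩⟩
  obtain ⟨hWF, hTW, hvW⟩ := Finset.mem_filter.1 hW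
  refine ⟨W, ⟨hWF, hTW, hvW, fun W' hW' hTW' hvW' hW'W => ?_⟩,
    hmin S' (Finset.mem_filter.2 ⟨hS', hTS', hvS'⟩)⟩
  exact (hIS.SM W' hW' W hWF hW'W).not_ge (hmin W' (Finset.mem_filter.2 ⟨hW', hTW', hvW'⟩))

theorem ncard_hat_add_card_le_s4 {S P : Finset V} (hS : S ∈ Fam.F) (hP : P ∈ Fam.Pred S) :
    (Fam.hat S).ncard + P.card ≤ S.card + (Fam.Vis S \ ↑S).ncard := by
  have hLVS := hIS.LVS S hS P hP
  have hVis_split := Set.ncard_inter_add_ncard_sdiff_eq_ncard (Fam.Vis S) ↑S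
  have hunion : (Fam.hat S ∪ Fam.Vis S ∩ ↑S).ncard = (Fam.hat S).ncard + (Fam.Vis S ∩ ↑S).ncard :=
    Set.ncard_union_eq ((disjoint_hat_Vis S).mono_right Set.inter_subset_left)
  have hsub : (Fam.hat S ∪ Fam.Vis S ∩ ↑S).ncard ≤ S.card := by
    rw [← Set.ncard_coe_finset S]
    exact Set.ncard_le_ncard (Set.union_subset Set.sdiff_subset Set.inter_subset_right)
  omega

theorem exists_ncard_hat_le_two_pow_mul {S : Finset V} (hS : S ∈ Fam.F) (hne : S ≠ sm) :
    ∃ d, (Fam.hat S).ncard ≤ 2 ^ d * (Fam.Vis S \ ↑S).ncard ∧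
      ∀ T ∈ Fam.F, Fam.prec T S → d + T.card ≤ S.card := by
  obtain ⟨P, hP, hPmax⟩ := hIS.exists_mem_Pred_forall_card_le hS hne
  obtain ⟨v, hvVis, hvS⟩ := Set.not_subset.1 (hIS.DVS S hS hne)
  have hVis_pos : 0 < (Fam.Vis S \ ↑S).ncard := (Set.ncard_pos (Set.toFinite _)).2 ⟨v, hvVis, hvS⟩
  have hPS := hIS.SM P hP.1 S hS hP.2.1
  have hhat := hIS.ncard_hat_add_card_le_s4 hS hP
  refine ⟨S.card - P.card, ?_, fun T hT hTS => by have := hPmax T hT hTS; omega⟩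
  calc (Fam.hat S).ncard ≤ (S.card - P.card) + (Fam.Vis S \ ↑S).ncard := by omega
    _ ≤ (S.card - P.card + 1) * (Fam.Vis S \ ↑S).ncard := by nlinarith
    _ ≤ 2 ^ (S.card - P.card) * (Fam.Vis S \ ↑S).ncard :=
        Nat.mul_le_mul_right _ Nat.lt_two_pow_self

theorem isWitness_of_mem_Vis {S T : Finset V} {v : V} (hS : S ∈ Fam.F) (hv : v ∈ Fam.Vis S)
    (hvS : v ∉ S) (hT : T ∈ Fam.F) (hTS : Fam.prec T S) (hvT : v ∈ T) :
    Fam.IsWitness T v S := by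
  refine ⟨hS, hTS, hvS, fun W hW hTW hvW hWS => ?_⟩
  -- an immediate predecessor of `S` above `W` misses `v` by TE, hence covers `v`
  obtain ⟨P, hP, hWP⟩ := hIS.exists_mem_Pred_of_prec hW hWS
  rcases hWP with rfl | hWP
  · exact hv.2 W hP ⟨T, hT, hTW, hvT, hvW⟩
  · exact hv.2 P hP
      ⟨T, hT, Fam.prec_trans hTW hWP, hvT, hIS.TE T hT W hW P hP.1 hTW hWP v hvT hvW⟩

theorem exists_isWitness_of_mem_Vis {S : Finset V} {v : V} (hS : S ∈ Fam.F)
    (hv : v ∈ Fam.Vis S) (hvS : v ∉ S) :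
    ∃ T ∈ Fam.F, Fam.prec T S ∧ v ∈ Fam.hat T ∧ Fam.IsWitness T v S := by
  classical
  obtain ⟨P, hP, hvP⟩ := hv.1
  obtain ⟨T, hT, hmin⟩ := Finset.exists_min_image
    (Fam.F.filter fun T => Fam.prec T S ∧ v ∈ T) Finset.card
    ⟨P, Finset.mem_filter.2 ⟨hP.1, hP.2.1, hvP⟩⟩
  obtain ⟨hTF, hTS, hvT⟩ := Finset.mem_filter.1 hT
  refine ⟨T, hTF, hTS, ⟨hvT, fun hcov => ?_⟩, hIS.isWitness_of_mem_Vis hS hv hvS hTF hTS hvT⟩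
  obtain ⟨R, ⟨hRF, hRT⟩, hvR⟩ := Set.mem_iUnion₂.1 hcov
  exact (hIS.SM R hRF T hTF hRT).not_ge
    (hmin R (Finset.mem_filter.2 ⟨hRF, Fam.prec_trans hRT hTS, hvR⟩))

theorem mem_hatx_of_isWitness {x : ℕ} {S T : Finset V} {v : V} (hT : T ∈ Fam.F)
    (hv : v ∈ Fam.hat T) (hW : Fam.IsWitness T v S) (hx : x < ex sm S) :
    v ∈ Fam.hatx sm x T := by
  refine ⟨hv, fun ⟨S', hS', hTS', hvS'⟩ => ?_⟩
  obtain ⟨hS'F, hS'x⟩ := Finset.mem_filter.1 hS'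
  obtain ⟨W, hW', hWcard⟩ := hIS.exists_isWitness hS'F hTS' hvS'
  have hWS : W = S := hIS.SW T hT v hv.1 W S hW' hW
  have : ex sm S ≤ ex sm S' := Nat.sub_le_sub_right (hWS ▸ hWcard) _
  omega

theorem exists_charge {x : ℕ} {S : Finset V} {v : V} (hS : S ∈ Fam.F)
    (hexS : ex sm S = x + 1) (hv : v ∈ Fam.Vis S \ ↑S) :
    ∃ T ∈ Fam.Ex sm x, Fam.prec T S ∧
      v ∈ Fam.hatx sm x T \ Fam.hatx sm (x + 1) T ∧ Fam.IsWitness T v S := by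
  obtain ⟨T, hTF, hTS, hvT, hW⟩ := hIS.exists_isWitness_of_mem_Vis hS hv.1 hv.2
  have hTS_card := hIS.SM T hTF S hS hTS
  refine ⟨T, Finset.mem_filter.2 ⟨hTF, ?_⟩, hTS, ⟨hIS.mem_hatx_of_isWitness hTF hvT hW (by omega),
    not_mem_hatx_of_isWitness hW (Finset.mem_filter.2 ⟨hS, hexS.le⟩)⟩, hW⟩
  unfold ex at hexS ⊢
  omega

theorem sum_ncard_hatx_succ_le (x : ℕ) :
    ∑ S ∈ Fam.F.filter (ex sm · = x + 1), (Fam.hatx sm (x + 1) S).ncard ≤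
      ∑ T ∈ Fam.Ex sm x,
        2 ^ (x + 1 - ex sm T) * (Fam.hatx sm x T \ Fam.hatx sm (x + 1) T).ncard := by
  classical
  set New := Fam.F.filter (ex sm · = x + 1)
  have hNew : ∀ S ∈ New, S ∈ Fam.F ∧ ex sm S = x + 1 := fun S hS => Finset.mem_filter.1 hS
  have hgap : ∀ S ∈ New, ∃ d, (Fam.hat S).ncard ≤ 2 ^ d * (Fam.Vis S \ ↑S).ncard ∧
      ∀ T ∈ Fam.F, Fam.prec T S → d + T.card ≤ S.card := fun S hS =>
    hIS.exists_ncard_hat_le_two_pow_mul (hNew S hS).1 fun h => by simpa [h, ex] using (hNew S hS).2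
  choose! d hd_hat hd_pred using hgap
  have hcharge : ∀ S ∈ New, ∀ v ∈ (Fam.Vis S \ ↑S).toFinset, ∃ T ∈ Fam.Ex sm x, Fam.prec T S ∧
      v ∈ Fam.hatx sm x T \ Fam.hatx sm (x + 1) T ∧ Fam.IsWitness T v S := fun S hS v hv =>
    hIS.exists_charge (hNew S hS).1 (hNew S hS).2 (Set.mem_toFinset.1 hv)
  choose! f hfEx hfS hflost hfW using hcharge
  have hweight : ∀ S ∈ New, ∀ T ∈ Fam.F, Fam.prec T S → 2 ^ d S ≤ 2 ^ (x + 1 - ex sm T) := by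
    intro S hS T hT hTS
    have hdT := hd_pred S hS T hT hTS
    have hsmT := hIS.card_le hT
    have hexS := (hNew S hS).2
    unfold ex at hexS ⊢
    exact pow_le_pow_right₀ one_le_two (by omega)
  calc ∑ S ∈ New, (Fam.hatx sm (x + 1) S).ncard
      ≤ ∑ S ∈ New, (Fam.Vis S \ ↑S).toFinset.card • 2 ^ d S := Finset.sum_le_sum fun S hS => by
        rw [smul_eq_mul, ← Set.ncard_eq_toFinset_card', mul_comm]
        exact (Set.ncard_le_ncard (Set.sep_subset _ _)).trans (hd_hat S hS)
    _ ≤ ∑ T ∈ Fam.Ex sm x,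
          (Fam.hatx sm x T \ Fam.hatx sm (x + 1) T).toFinset.card • 2 ^ (x + 1 - ex sm T) :=
        Finset.sum_card_smul_le_sum_card_smul f
          (fun S hS v hv => ⟨hfEx S hS v hv, Set.mem_toFinset.2 (hflost S hS v hv)⟩)
          (fun S hS v hv => hweight S hS _ (Finset.mem_filter.1 (hfEx S hS v hv)).1 (hfS S hS v hv))
          (fun S hS S' hS' v hv hv' hf => hIS.SW (f S v) (Finset.mem_filter.1 (hfEx S hS v hv)).1 v
            (hflost S hS v hv).1.1.1 S S' (hfW S hS v hv) (hf ▸ hfW S' hS' v hv'))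
    _ = _ := by simp only [smul_eq_mul, ← Set.ncard_eq_toFinset_card', mul_comm]

end IsIS

end ISFamily

open ISFamily in
/-- `M(x+1) ≤ 2·M(x)` for every `x ≥ 0`. -/
theorem second_level_bound {V : Type*} [DecidableEq V] [Fintype V]
    (Fam : ISFamily V) (sm : Finset V) (hIS : Fam.IsIS sm) (x : ℕ) :
    Fam.M sm (x + 1) ≤ 2 * Fam.M sm x := by
  rw [M_succ_eq, two_mul_M_eq]
  exact Nat.add_le_add_left (hIS.sum_ncard_hatx_succ_le x) _
end

section
/- Let (F, ≺) be an IS-family. Call S ∈ F principal if hat(S) = S \ ⋃_{S' ≺ S} S' is nonempty, and let Pr_x be the set of principal elements of excess at most x. Then ⋃_{S ∈ Pr_x} S = ⋃_{S ∈ E_x} S, where E_x is the set of all elements of excess at most x. -/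
private lemma principal_aux {V : Type*} [DecidableEq V] [Fintype V]
    (Fam : ISFamily V) (sm : Finset V) (hIS : Fam.IsIS sm) (x : ℕ) (v : V) :
    ∀ S, S ∈ Fam.F → ISFamily.ex sm S ≤ x → v ∈ S →
      ∃ T ∈ Fam.F, ISFamily.ex sm T ≤ x ∧ (Fam.hat T).Nonempty ∧ v ∈ T := by
  suffices h : ∀ n S, S.card = n → S ∈ Fam.F → ISFamily.ex sm S ≤ x → v ∈ S →
      ∃ T ∈ Fam.F, ISFamily.ex sm T ≤ x ∧ (Fam.hat T).Nonempty ∧ v ∈ T by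
    exact fun S => h S.card S rfl
  intro n
  induction n using Nat.strong_induction_on with
  | _ n ih =>
    rintro S rfl hS hex hv
    by_cases hne : (Fam.hat S).Nonempty
    · exact ⟨S, hS, hex, hne, hv⟩
    · have hvn : v ∉ Fam.hat S := fun h => hne ⟨v, h⟩
      simp only [ISFamily.hat, Set.mem_diff, Set.mem_iUnion, Set.mem_setOf_eq,
        Finset.mem_coe, not_and, not_not, exists_prop] at hvn
      obtain ⟨S', ⟨hS'F, hprec⟩, hvS'⟩ := hvn hv
      have hcard := hIS.SM S' hS'F S hS hprec
      exact ih S'.card hcard S' rfl hS'F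
        (le_trans (Nat.sub_le_sub_right hcard.le _) hex) hvS'

open ISFamily in
/-- the union of the principal elements of excess at most `x`
equals the union of all elements of excess at most `x`. -/
theorem principal_union_eq {V : Type*} [DecidableEq V] [Fintype V]
    (Fam : ISFamily V) (sm : Finset V) (hIS : Fam.IsIS sm) (x : ℕ) :
    (⋃ S ∈ {S | S ∈ Fam.F ∧ ex sm S ≤ x ∧ (Fam.hat S).Nonempty}, (↑S : Set V)) =
      ⋃ S ∈ Fam.Ex sm x, (↑S : Set V) := by
  ext v
  simp only [Set.mem_iUnion, Set.mem_setOf_eq, Finset.mem_coe, exists_prop,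
    ISFamily.Ex, Finset.mem_filter]
  constructor
  · rintro ⟨S, ⟨hF, hex, _⟩, hv⟩
    exact ⟨S, ⟨hF, hex⟩, hv⟩
  · rintro ⟨S, ⟨hF, hex⟩, hv⟩
    obtain ⟨T, hT, hexT, hne, hvT⟩ := principal_aux Fam sm hIS x v S hF hex hv
    exact ⟨T, ⟨hT, hexT, hne⟩, hvT⟩
end

section
/- In a finite undirected graph G with disjoint vertex sets X, Y, if K₁ and K₂ are X–Y separators with K₁ ≺* K₂ (i.e., NR(G,Y,K₁) ⊊ NR(G,Y,K₂)), then K₁ \ K₂ ⊆ NR(G,Y,K₂). -/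
/-- The graph obtained from `G` by deleting the vertex set `B`
(edges incident to `B` are removed). -/
def SimpleGraph.deleteSet {V : Type*} (G : SimpleGraph V) (B : Set V) : SimpleGraph V where
  Adj u v := G.Adj u v ∧ u ∉ B ∧ v ∉ B
  symm := ⟨fun u v ⟨h, hu, hv⟩ => ⟨h.symm, hv, hu⟩⟩
  loopless := ⟨fun u h => G.loopless.irrefl u h.1⟩

/-- `NR G A B` : the set of vertices not reachable from `A` in `G − B`. -/
def NR {V : Type*} (G : SimpleGraph V) (A B : Set V) : Set V :=
  {v | ∀ a ∈ A, ¬ (G.deleteSet B).Reachable a v}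

/-- `K` is an `X–Y` separator: it is disjoint from `X ∪ Y` and its removal
leaves no path from `X` to `Y`. -/
def IsSeparator {V : Type*} (G : SimpleGraph V) (X Y K : Set V) : Prop :=
  Disjoint K (X ∪ Y) ∧ ∀ x ∈ X, ∀ y ∈ Y, ¬ (G.deleteSet K).Reachable x y

/-- The order `≺*` on `X–Y` separators: `K₁ ≺* K₂` iff `NR(G,Y,K₁) ⊊ NR(G,Y,K₂)`. -/
def precStar {V : Type*} (G : SimpleGraph V) (Y K₁ K₂ : Set V) : Prop :=
  NR G Y K₁ ⊂ NR G Y K₂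

/-- An important `X–Y` separator: a minimal separator `K` such that no separator
`K'` satisfies `K ≺* K'` and `|K'| ≤ |K|`. -/
def IsImportant {V : Type*} (G : SimpleGraph V) (X Y K : Set V) : Prop :=
  IsSeparator G X Y K ∧ (∀ K' ⊂ K, ¬ IsSeparator G X Y K') ∧
    ¬ ∃ K', IsSeparator G X Y K' ∧ precStar G Y K K' ∧ K'.ncard ≤ K.ncard

theorem SimpleGraph.notMem_of_reachable_deleteSet {V : Type*} {G : SimpleGraph V} {B : Set V}
    {u v : V} (h : (G.deleteSet B).Reachable u v) (hu : u ∉ B) : v ∉ B := by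
  obtain ⟨p⟩ := h.symm
  cases p with
  | nil => exact hu
  | cons hadj _ => exact hadj.2.1

theorem subset_NR_of_disjoint {V : Type*} (G : SimpleGraph V) {A B : Set V}
    (h : Disjoint B A) : B ⊆ NR G A B :=
  fun _ hv _ ha hreach =>
    G.notMem_of_reachable_deleteSet hreach (Set.disjoint_right.mp h ha) hv

theorem sdiff_subset_NR_general {V : Type*} (G : SimpleGraph V) (X Y : Set V)
    (K₁ K₂ : Set V)
    (h₁ : IsSeparator G X Y K₁)
    (h₁₂ : precStar G Y K₁ K₂) : K₁ \ K₂ ⊆ NR G Y K₂ :=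
  calc K₁ \ K₂ ⊆ K₁ := Set.sdiff_subset
    _ ⊆ NR G Y K₁ := subset_NR_of_disjoint G (h₁.1.mono_right Set.subset_union_right)
    _ ⊆ NR G Y K₂ := h₁₂.subset

/-- if `K₁ ≺* K₂` then `K₁ \ K₂ ⊆ NR(G,Y,K₂)`. -/
theorem sdiff_subset_NR {V : Type*} (G : SimpleGraph V) (X Y : Set V)
    (hXY : Disjoint X Y) (K₁ K₂ : Set V)
    (h₁ : IsSeparator G X Y K₁) (h₂ : IsSeparator G X Y K₂)
    (h₁₂ : precStar G Y K₁ K₂) : K₁ \ K₂ ⊆ NR G Y K₂ :=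
  sdiff_subset_NR_general G X Y K₁ K₂ h₁ h₁₂
end

section
/- Let (G,T) be an instance of the multiway cut problem admitting at least one multiway cut. Then there exists a smallest multiway cut S of (G,T) such that every v ∈ S belongs to an important isolating cut of some terminal t ∈ T. -/
/-- A multiway cut of `(G,T)`: a set of non-terminal vertices whose removal
separates every pair of distinct terminals. -/
def IsMultiwayCut {V : Type*} (G : SimpleGraph V) (T S : Set V) : Prop :=
  Disjoint S T ∧ ∀ t₁ ∈ T, ∀ t₂ ∈ T, t₁ ≠ t₂ → ¬ (G.deleteSet S).Reachable t₁ t₂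

namespace SimpleGraph

variable {V : Type*} {G H : SimpleGraph V}

lemma deleteSet_anti {B B' : Set V} (h : B' ⊆ B) : G.deleteSet B ≤ G.deleteSet B' :=
  fun _ _ hadj => ⟨hadj.1, fun hu => hadj.2.1 (h hu), fun hv => hadj.2.2 (h hv)⟩

lemma Reachable.mem_of_adj_closed {R : Set V} {a b : V} (h : H.Reachable a b) (ha : a ∈ R)
    (hR : ∀ u v, u ∈ R → H.Adj u v → v ∈ R) : b ∈ R := by
  obtain ⟨p⟩ := h
  induction p with
  | nil => exact ha
  | cons huv _ ih => exact ih (hR _ _ ha huv)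

lemma eq_of_reachable_deleteSet_of_mem {B : Set V} {a b : V}
    (h : (G.deleteSet B).Reachable a b) (hb : b ∈ B) : a = b := by
  have : b ∉ B ∨ b = a := h.mem_of_adj_closed (R := {v | v ∉ B ∨ v = a}) (Or.inr rfl)
    fun _ _ _ hadj => Or.inl hadj.2.2
  exact (this.resolve_left (not_not.2 hb)).symm

end SimpleGraph

open SimpleGraph Set

section NR

variable {V : Type*} {G : SimpleGraph V} {A B : Set V} {u v : V}

lemma notMem_NR : v ∉ NR G A B ↔ ∃ a ∈ A, (G.deleteSet B).Reachable a v := by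
  simp [NR]

lemma NR_mono {B' : Set V} (h : B' ⊆ B) : NR G A B' ⊆ NR G A B :=
  fun _ hv a ha hr => hv a ha (hr.mono (deleteSet_anti h))

lemma mem_NR_of_mem (hBA : Disjoint B A) (hv : v ∈ B) : v ∈ NR G A B :=
  fun _ ha hr => disjoint_left.mp hBA hv (eq_of_reachable_deleteSet_of_mem hr hv ▸ ha)

lemma notMem_NR_of_deleteSet_adj (hu : u ∉ NR G A B) (huv : (G.deleteSet B).Adj u v) :
    v ∉ NR G A B := by
  obtain ⟨a, ha, hr⟩ := notMem_NR.1 hu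
  exact notMem_NR.2 ⟨a, ha, hr.trans huv.reachable⟩

lemma notMem_NR_of_adj (hBA : Disjoint B A) (hu : u ∉ NR G A B) (huv : G.Adj u v) (hv : v ∉ B) :
    v ∉ NR G A B :=
  notMem_NR_of_deleteSet_adj hu ⟨huv, fun huB => hu (mem_NR_of_mem hBA huB), hv⟩

lemma compl_NR_subset_of_closed {R : Set V} (hA : A ⊆ R)
    (hR : ∀ u v, u ∈ R → (G.deleteSet B).Adj u v → v ∈ R) : (NR G A B)ᶜ ⊆ R := by
  intro v hv
  obtain ⟨a, ha, hr⟩ := notMem_NR.1 hv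
  exact hr.mem_of_adj_closed (hA ha) hR

lemma NR_subset_of_subset_NR {J : Set V} (hJB : J ⊆ NR G A B) : NR G A J ⊆ NR G A B := by
  have : (NR G A B)ᶜ ⊆ (NR G A J)ᶜ ∩ (NR G A B)ᶜ :=
    compl_NR_subset_of_closed (fun a ha => ⟨notMem_NR.2 ⟨a, ha, .rfl⟩, notMem_NR.2 ⟨a, ha, .rfl⟩⟩)
      fun u v ⟨huJ, huB⟩ huv => by
        have hvB : v ∉ NR G A B := notMem_NR_of_deleteSet_adj huB huv
        exact ⟨notMem_NR_of_deleteSet_adj huJ ⟨huv.1, fun h => huB (hJB h), fun h => hvB (hJB h)⟩,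
          hvB⟩
  exact compl_subset_compl.1 fun v hv => (this hv).1

lemma NR_inter_eq {W D : Set V} (hWA : Disjoint W A)
    (hD : ∀ d ∉ D, ∀ z ∉ NR G A W, ¬ G.Adj z d) : NR G A (W ∩ D) = NR G A W := by
  refine (NR_mono inter_subset_left).antisymm <| compl_subset_compl.1 <|
    compl_NR_subset_of_closed (fun a ha => notMem_NR.2 ⟨a, ha, .rfl⟩) fun u v hu huv => ?_
  by_cases hvD : v ∈ D
  · exact notMem_NR_of_adj hWA hu huv.1 fun hvW => huv.2.2 ⟨hvW, hvD⟩
  · exact absurd huv.1 (hD v hvD u hu)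

end NR

section Separator

variable {V : Type*} {G : SimpleGraph V} {X Y J K : Set V}

lemma isSeparator_iff : IsSeparator G X Y K ↔ Disjoint K (X ∪ Y) ∧ X ⊆ NR G Y K :=
  and_congr_right fun _ =>
    ⟨fun h x hx y hy hr => h x hx y hy hr.symm, fun h _ hx y hy hr => h hx y hy hr.symm⟩

lemma IsSeparator.compl_NR_subset_NR (hJ : IsSeparator G X Y J) : (NR G X J)ᶜ ⊆ NR G Y J := by
  intro v hv y hy hyv
  obtain ⟨x, hx, hxv⟩ := notMem_NR.1 hv
  exact hJ.2 x hx y hy (hxv.trans hyv.symm)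

lemma exists_adj_of_minimal_isSeparator (hK : Minimal (IsSeparator G X Y) K) {k : V}
    (hk : k ∈ K) : ∃ w ∉ NR G X K, G.Adj w k := by
  by_contra! hno
  have hKX : Disjoint K X := hK.prop.1.mono_right subset_union_left
  refine hK.not_prop_of_lt (sdiff_singleton_ssubset.2 hk)
    ⟨hK.prop.1.mono_left sdiff_subset, fun x hx y hy hr => ?_⟩
  have hyK : y ∉ NR G X K := hr.mem_of_adj_closed (R := (NR G X K)ᶜ) (notMem_NR.2 ⟨x, hx, .rfl⟩)
    fun u v hu huv => by
      have hvk : v ≠ k := fun h => hno u hu (h ▸ huv.1)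
      exact notMem_NR_of_adj hKX hu huv.1 fun hvK => huv.2.2 ⟨hvK, hvk⟩
  obtain ⟨x', hx', hr'⟩ := notMem_NR.1 hyK
  exact hK.prop.2 x' hx' y hy hr'

lemma IsSeparator.compl_NR_subset_NR_of_subset (hJ : IsSeparator G X Y J)
    (hJK : J ⊆ NR G X K) : (NR G X K)ᶜ ⊆ NR G Y J :=
  (compl_subset_compl.2 (NR_subset_of_subset_NR hJK)).trans hJ.compl_NR_subset_NR

lemma subset_NR_of_minimal_isSeparator (hK : Minimal (IsSeparator G X Y) K)
    (hJ : IsSeparator G X Y J) (hJK : J ⊆ NR G X K) : K ⊆ NR G Y J := by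
  have hJY : Disjoint J Y := hJ.1.mono_right subset_union_right
  intro k hk
  by_cases hkJ : k ∈ J
  · exact mem_NR_of_mem hJY hkJ
  obtain ⟨w, hw, hwk⟩ := exists_adj_of_minimal_isSeparator hK hk
  by_contra hkY
  exact notMem_NR_of_adj hJY hkY hwk.symm (fun hwJ => hw (hJK hwJ))
    (hJ.compl_NR_subset_NR_of_subset hJK hw)

lemma mem_NR_of_adj_of_notMem_NR (hK : Minimal (IsSeparator G X Y) K)
    (hJ : IsSeparator G X Y J) (hJK : J ⊆ NR G X K) {d z : V} (hd : d ∉ NR G X K)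
    (hdz : G.Adj d z) :
    z ∈ NR G Y J := by
  by_cases hzK : z ∈ K
  · exact subset_NR_of_minimal_isSeparator hK hJ hJK hzK
  · exact hJ.compl_NR_subset_NR_of_subset hJK
      (notMem_NR_of_adj (hK.prop.1.mono_right subset_union_left) hd hdz hzK)

/-- Among the separators of size at most `|K|` avoiding the `X`-side of `K`, take one of least
size and, among those, one with the largest unreachable set. Avoiding the `X`-side is what keeps
`K` unreachable from `Y`, and it is inherited by subsets. -/
lemma exists_isImportant_subset_NR [Finite V] (hK : Minimal (IsSeparator G X Y) K) :
    ∃ J, IsImportant G X Y J ∧ J.ncard ≤ K.ncard ∧ K ⊆ NR G Y J := by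
  set C := {J | IsSeparator G X Y J ∧ J.ncard ≤ K.ncard ∧ J ⊆ NR G X K}
  have hKC : K ∈ C :=
    ⟨hK.prop, le_rfl, fun _ hk => mem_NR_of_mem (hK.prop.1.mono_right subset_union_left) hk⟩
  obtain ⟨J₀, hJ₀C, hJ₀min⟩ := C.exists_min_image ncard (toFinite _) ⟨K, hKC⟩
  obtain ⟨J, ⟨⟨hJ, hJK, hJX⟩, hJJ₀⟩, hJmax⟩ := {J ∈ C | J.ncard ≤ J₀.ncard}.exists_min_image
    (fun J => (NR G Y J)ᶜ.ncard) (toFinite _) ⟨J₀, hJ₀C, le_rfl⟩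
  refine ⟨J, ⟨hJ, fun J' hJ'J hJ' => ?_, ?_⟩, hJK, subset_NR_of_minimal_isSeparator hK hJ hJX⟩
  · have hJ'C : J' ∈ C := ⟨hJ', (ncard_le_ncard hJ'J.1).trans hJK, hJ'J.1.trans hJX⟩
    exact (ncard_lt_ncard hJ'J).not_ge (hJJ₀.trans (hJ₀min J' hJ'C))
  · rintro ⟨W, hW, hJW, hWJ⟩
    have hNR : NR G Y (W ∩ NR G X K) = NR G Y W :=
      NR_inter_eq (hW.1.mono_right subset_union_right) fun d hd z hz hzd =>
        hz (hJW.1 (mem_NR_of_adj_of_notMem_NR hK hJ hJX hd hzd.symm))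
    have hW₀ : IsSeparator G X Y (W ∩ NR G X K) :=
      isSeparator_iff.2 ⟨hW.1.mono_left inter_subset_left, hNR ▸ (isSeparator_iff.1 hW).2⟩
    have hW₀J : (W ∩ NR G X K).ncard ≤ J.ncard :=
      (ncard_le_ncard inter_subset_left).trans hWJ
    have hW₀C : W ∩ NR G X K ∈ C := ⟨hW₀, hW₀J.trans hJK, inter_subset_right⟩
    have hle := hJmax _ ⟨hW₀C, hW₀J.trans hJJ₀⟩
    rw [hNR] at hle
    exact hle.not_gt (ncard_lt_ncard (compl_lt_compl_iff_lt.2 hJW))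

end Separator

section MultiwayCut

variable {V : Type*} {G : SimpleGraph V} {T S : Set V}

lemma IsMultiwayCut.isSeparator (hS : IsMultiwayCut G T S) {t : V} (ht : t ∈ T) :
    IsSeparator G {t} (T \ {t}) S :=
  ⟨hS.1.mono_right (union_subset (singleton_subset_iff.2 ht) sdiff_subset),
    fun _ hx y hy => hx ▸ hS.2 t ht y hy.1 (Ne.symm hy.2)⟩

/-- Marx's pushing lemma, with `K ⪯* J` weakened to `K ⊆ NR G (T \ {t}) J`. -/
lemma IsMultiwayCut.sdiff_union {K J : Set V} {t : V} (hS : IsMultiwayCut G T S)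
    (hJT : Disjoint J T) (hKJ : K ⊆ NR G (T \ {t}) J) : IsMultiwayCut G T ((S \ K) ∪ J) := by
  refine ⟨disjoint_union_left.2 ⟨hS.1.mono_left sdiff_subset, hJT⟩, ?_⟩
  suffices h : ∀ a ∈ T, a ≠ t → ∀ b ∈ T, a ≠ b → ¬ (G.deleteSet ((S \ K) ∪ J)).Reachable a b by
    intro a ha b hb hab
    by_cases hat : a = t
    · exact fun hr => h b hb (fun hbt => hab (hat.trans hbt.symm)) a ha (Ne.symm hab) hr.symm
    · exact h a ha hat b hb hab
  intro a ha hat b hb hab hr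
  have hSJ : Disjoint (S ∪ J) {a} :=
    disjoint_singleton_right.2 fun h => h.elim (disjoint_right.1 hS.1 ha) (disjoint_right.1 hJT ha)
  have hclosed : (NR G {a} ((S \ K) ∪ J))ᶜ ⊆ (NR G {a} (S ∪ J))ᶜ :=
    compl_NR_subset_of_closed (fun a' ha' => notMem_NR.2 ⟨a, rfl, ha' ▸ .rfl⟩) fun u v hu huv => by
      obtain ⟨_, rfl, hau⟩ := notMem_NR.1 hu
      have hvK : v ∉ K := fun hvK => hKJ hvK _ ⟨ha, hat⟩ <|
        (hau.mono (deleteSet_anti subset_union_right)).trans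
          (Adj.reachable ⟨huv.1, fun h => huv.2.1 (.inr h), fun h => huv.2.2 (.inr h)⟩)
      exact notMem_NR_of_adj hSJ hu huv.1 fun h => huv.2.2 (h.imp (fun hvS => ⟨hvS, hvK⟩) id)
  obtain ⟨a', rfl, hr'⟩ := notMem_NR.1 (hclosed (notMem_NR.2 ⟨a, rfl, hr⟩))
  exact hS.2 a' ha b hb hab (hr'.mono (deleteSet_anti subset_union_left))

def importantIsolatingCutVertices (G : SimpleGraph V) (T : Set V) : Set V :=
  {v | ∃ t ∈ T, ∃ K, IsImportant G {t} (T \ {t}) K ∧ v ∈ K}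

lemma IsMultiwayCut.exists_subset_sdiff_union_importantIsolatingCutVertices [Finite V] {v : V}
    (hS : IsMultiwayCut G T S) (hSmin : ∀ S', IsMultiwayCut G T S' → S.ncard ≤ S'.ncard)
    (hv : v ∈ S) : ∃ S', IsMultiwayCut G T S' ∧ S'.ncard ≤ S.ncard ∧
      S' ⊆ (S \ {v}) ∪ importantIsolatingCutVertices G T := by
  obtain ⟨t, ht, t', ht', hne, hr⟩ :
      ∃ t ∈ T, ∃ t' ∈ T, t ≠ t' ∧ (G.deleteSet (S \ {v})).Reachable t t' := by
    by_contra! h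
    exact (hSmin _ ⟨hS.1.mono_left sdiff_subset, h⟩).not_gt (ncard_sdiff_singleton_lt_of_mem hv)
  obtain ⟨K, hKS, hK⟩ := exists_minimal_le_of_wellFoundedLT _ S (hS.isSeparator ht)
  have hvK : v ∈ K := by
    by_contra hvK
    refine hK.prop.2 t rfl t' ⟨ht', Ne.symm hne⟩ (hr.mono (deleteSet_anti fun k hk => ?_))
    exact ⟨hKS hk, fun hkv => hvK (hkv ▸ hk)⟩
  obtain ⟨J, hJ, hJK, hKJ⟩ := exists_isImportant_subset_NR hK
  have hJT : Disjoint J T := union_sdiff_cancel (singleton_subset_iff.2 ht) ▸ hJ.1.1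
  refine ⟨(S \ K) ∪ J, hS.sdiff_union hJT hKJ, ?_, union_subset_union
    (sdiff_subset_sdiff_right (singleton_subset_iff.2 hvK)) fun u hu => ⟨t, ht, J, hJ, hu⟩⟩
  have := ncard_sdiff_add_ncard_of_subset hKS
  have := ncard_union_le (S \ K) J
  omega

end MultiwayCut

/-- if `(G,T)` admits a multiway cut, then it admits a smallest
multiway cut `S` such that every vertex of `S` belongs to an important
isolating cut of some terminal `t ∈ T`. -/
theorem smallest_mwc_in_important_isolating_cuts {V : Type*} [Fintype V]
    (G : SimpleGraph V) (T : Set V) (hex : ∃ S, IsMultiwayCut G T S) :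
    ∃ S, IsMultiwayCut G T S ∧
      (∀ S', IsMultiwayCut G T S' → S.ncard ≤ S'.ncard) ∧
      ∀ v ∈ S, ∃ t ∈ T, ∃ K, IsImportant G {t} (T \ {t}) K ∧ v ∈ K := by
  set I := importantIsolatingCutVertices G T
  obtain ⟨S₀, hS₀, hS₀min⟩ := {S | IsMultiwayCut G T S}.exists_min_image ncard (toFinite _) hex
  obtain ⟨S, ⟨hS, hSmin⟩, hSI⟩ :=
    {S | IsMultiwayCut G T S ∧ ∀ S', IsMultiwayCut G T S' → S.ncard ≤ S'.ncard}.exists_min_image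
      (fun S => (S \ I).ncard) (toFinite _) ⟨S₀, hS₀, hS₀min⟩
  refine ⟨S, hS, hSmin, fun v hv => by_contra fun hvI => ?_⟩
  obtain ⟨S', hS', hS'S, hS'I⟩ :=
    hS.exists_subset_sdiff_union_importantIsolatingCutVertices hSmin hv
  have hsub : S' \ I ⊂ S \ I := by
    refine lt_of_le_of_lt (fun u ⟨hu, huI⟩ => ?_) (sdiff_singleton_ssubset.2 ⟨hv, hvI⟩)
    obtain ⟨huS, huv⟩ := (hS'I hu).resolve_right huI
    exact ⟨⟨huS, huI⟩, huv⟩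
  exact (hSI S' ⟨hS', fun S'' h => hS'S.trans (hSmin S'' h)⟩).not_gt (ncard_lt_ncard hsub)
end
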